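/- Fix α = 1.5 and positive reals k, ν. The inequality −1 < ((1.5−1.5) + k(ν−ρ)|ξ|²)/(1.5+kν|ξ|²) < 1 holds for all nonzero ξ ∈ ℤ³ if and only if 0 ≤ ρ ≤ 2ν. -/
import Mathlib


/-- With `α = 1.5`, the normal-mode factor
`C = ((1.5 - 1.5) + k(ν-ρ)|ξ|²)/(1.5 + kν|ξ|²)` satisfies `-1 < C < 1`
for every nonzero `ξ ∈ ℤ³` if and only if `0 ≤ ρ ≤ 2ν`. -/
theorem normal_mode_parameter_range (k ν ρ : ℝ) (hk : 0 < k) (hν : 0 < ν) :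
    (∀ ξ : Fin 3 → ℤ, ξ ≠ 0 →
      -1 < (((1.5 : ℝ) - 1.5) + k * (ν - ρ) * (∑ i, ((ξ i : ℝ)) ^ 2)) /
            (1.5 + k * ν * (∑ i, ((ξ i : ℝ)) ^ 2)) ∧
      (((1.5 : ℝ) - 1.5) + k * (ν - ρ) * (∑ i, ((ξ i : ℝ)) ^ 2)) /
            (1.5 + k * ν * (∑ i, ((ξ i : ℝ)) ^ 2)) < 1) ↔
    (0 ≤ ρ ∧ ρ ≤ 2 * ν) := by
  constructor
  · intro h
    have key : ∀ n : ℕ, 1 ≤ n →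
        -1 * (1.5 + k * ν * (n : ℝ) ^ 2) <
            ((1.5 : ℝ) - 1.5) + k * (ν - ρ) * (n : ℝ) ^ 2 ∧
        ((1.5 : ℝ) - 1.5) + k * (ν - ρ) * (n : ℝ) ^ 2 <
            1 * (1.5 + k * ν * (n : ℝ) ^ 2) := by
      intro n hn
      have hD : (0:ℝ) < 1.5 + k * ν * (n : ℝ) ^ 2 := by positivity
      have hξ := h ![(n : ℤ), 0, 0] (by
        intro hc
        have h0 := congrFun hc 0
        simp at h0
        omega)
      rw [Fin.sum_univ_three] at hξ
      simp only [Matrix.cons_val_zero, Matrix.cons_val_one, Matrix.head_cons,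
        Matrix.cons_val_two, Matrix.tail_cons] at hξ
      push_cast at hξ
      norm_num at hξ
      have hD' : (0:ℝ) < 3/2 + k * ν * (n : ℝ) ^ 2 := by positivity
      have h1' := (lt_div_iff₀ hD').mp hξ.1
      have h2' := (div_lt_iff₀ hD').mp hξ.2
      constructor <;> norm_num <;> linarith
    constructor
    · by_contra hρ
      push_neg at hρ
      have hp : (0:ℝ) < k * (-ρ) := mul_pos hk (neg_pos.mpr hρ)
      obtain ⟨n, hn⟩ := exists_nat_gt (1.5 / (k * (-ρ)))
      have hn' : 1.5 / (k * (-ρ)) < ((n + 1 : ℕ) : ℝ) := by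
        push_cast
        calc 1.5 / (k * (-ρ)) < (n : ℝ) := hn
          _ ≤ (n : ℝ) + 1 := by linarith
      have hn1 : 1 ≤ n + 1 := Nat.le_add_left 1 n
      have hsq : ((n + 1 : ℕ) : ℝ) ≤ ((n + 1 : ℕ) : ℝ) ^ 2 := by
        have h1 : (1:ℝ) ≤ ((n + 1 : ℕ) : ℝ) := by exact_mod_cast hn1
        nlinarith
      have h2 := (key (n + 1) hn1).2
      have e1 : 1.5 / (k * (-ρ)) * (k * (-ρ)) = 1.5 := div_mul_cancel₀ _ hp.ne'
      have e2 : 1.5 / (k * (-ρ)) * (k * (-ρ)) < ((n + 1 : ℕ) : ℝ) * (k * (-ρ)) :=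
        mul_lt_mul_of_pos_right hn' hp
      have e3 : ((n + 1 : ℕ) : ℝ) * (k * (-ρ)) ≤ ((n + 1 : ℕ) : ℝ) ^ 2 * (k * (-ρ)) :=
        mul_le_mul_of_nonneg_right hsq hp.le
      nlinarith [e1, e2, e3, h2]
    · by_contra hρ
      push_neg at hρ
      have hp : (0:ℝ) < k * (ρ - 2 * ν) := mul_pos hk (by linarith)
      obtain ⟨n, hn⟩ := exists_nat_gt (1.5 / (k * (ρ - 2 * ν)))
      have hn' : 1.5 / (k * (ρ - 2 * ν)) < ((n + 1 : ℕ) : ℝ) := by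
        push_cast
        calc 1.5 / (k * (ρ - 2 * ν)) < (n : ℝ) := hn
          _ ≤ (n : ℝ) + 1 := by linarith
      have hn1 : 1 ≤ n + 1 := Nat.le_add_left 1 n
      have hsq : ((n + 1 : ℕ) : ℝ) ≤ ((n + 1 : ℕ) : ℝ) ^ 2 := by
        have h1 : (1:ℝ) ≤ ((n + 1 : ℕ) : ℝ) := by exact_mod_cast hn1
        nlinarith
      have h1 := (key (n + 1) hn1).1
      have e1 : 1.5 / (k * (ρ - 2 * ν)) * (k * (ρ - 2 * ν)) = 1.5 := div_mul_cancel₀ _ hp.ne'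
      have e2 : 1.5 / (k * (ρ - 2 * ν)) * (k * (ρ - 2 * ν)) <
          ((n + 1 : ℕ) : ℝ) * (k * (ρ - 2 * ν)) := mul_lt_mul_of_pos_right hn' hp
      have e3 : ((n + 1 : ℕ) : ℝ) * (k * (ρ - 2 * ν)) ≤
          ((n + 1 : ℕ) : ℝ) ^ 2 * (k * (ρ - 2 * ν)) := mul_le_mul_of_nonneg_right hsq hp.le
      nlinarith [e1, e2, e3, h1]
  · rintro ⟨h0, h2⟩ ξ hξ
    set S := ∑ i, ((ξ i : ℝ)) ^ 2 with hS
    have hS1 : (1:ℝ) ≤ S := by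
      obtain ⟨i, hi⟩ := Function.ne_iff.mp hξ
      have hi0 : ξ i ≠ 0 := by simpa using hi
      have hi1 : (1:ℝ) ≤ ((ξ i : ℝ)) ^ 2 := by
        have habs := Int.one_le_abs hi0
        have : (1:ℤ) ≤ (ξ i) ^ 2 := by nlinarith [sq_abs (ξ i)]
        exact_mod_cast this
      calc (1:ℝ) ≤ ((ξ i : ℝ)) ^ 2 := hi1
        _ ≤ S := Finset.single_le_sum (f := fun j => ((ξ j : ℝ)) ^ 2)
              (fun j _ => by positivity) (Finset.mem_univ i)
    have hD : (0:ℝ) < 1.5 + k * ν * S := by positivity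
    constructor
    · rw [lt_div_iff₀ hD]
      nlinarith [mul_nonneg (mul_nonneg hk.le (by linarith : (0:ℝ) ≤ 2 * ν - ρ))
        (by linarith : (0:ℝ) ≤ S)]
    · rw [div_lt_iff₀ hD]
      nlinarith [mul_nonneg (mul_nonneg hk.le h0) (by linarith : (0:ℝ) ≤ S)]
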